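/- Let V be a finite type, c : V → V → ℝ≥0 a capacity function, S ⊆ V a subset, P ≥ 1 an integer, and s, t distinct vertices of V with s ∉ S and t ∉ S. Let c_s : V → V → ℝ≥0 with c_s u v = 0 unless u ∈ S and v ∈ S, and for all u, v ∈ S let σ_{u,v} : Fin P ≃ Fin P be a bijection. Assume c u v = 0 whenever u ∉ S and v ∉ S. Let f, g : V → V → ℝ satisfy 0 ≤ f u v ≤ c u v and 0 ≤ g u v ≤ c_s u v for all u, v, together with joint conservation ∑_u (f u v + g u v) = ∑_w (f v w + g v w) at every vertex v ∉ {s, t}, and let μ = ∑_w (f s w + g s w) − ∑_u (f u s + g u s). Then the function F on the P-fold sibling replication of S defined by F u v = f u v for u, v ∉ S; F u (v,i) = f u v and F (v,i) u = f v u for u ∉ S, v ∈ S; and F (u,i) (v,j) = (f u v if i = j else 0) + (g u v if j = σ_{u,v} i else 0) for u, v ∈ S, is a valid s-t flow of the P-fold sibling replication with value P · μ. -/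
import Mathlib


/-!
STATEMENT 13: Given `f` bounded by `c`, `g` bounded by `cs`, satisfying joint
conservation away from `s` and `t` and with joint value `μ`, the induced function `F` is
a valid s-t flow of the P-fold sibling replication of `S` with value `P · μ`.
-/

open Finset

attribute [local instance] Classical.propDecidable

set_option maxHeartbeats 1000000

noncomputable section

/-- `f` is an `s`-`t` flow for the capacity function `c`. -/
def IsFlow {W : Type*} [Fintype W] (c : W → W → NNReal) (s t : W) (f : W → W → ℝ) : Prop :=
  (∀ u v, 0 ≤ f u v ∧ f u v ≤ (c u v : ℝ)) ∧
  ∀ v, v ≠ s → v ≠ t → (∑ u, f u v) = (∑ w, f v w)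

/-- The value of a flow `f` with source `s`. -/
def flowValue {W : Type*} [Fintype W] (f : W → W → ℝ) (s : W) : ℝ :=
  (∑ w, f s w) - (∑ u, f u s)

/-- The capacity function of the `P`-fold sibling replication of `S`, with sibling
capacities `cs` and sibling bijections `σ`. -/
def sibRepCap {V : Type*} (c cs : V → V → NNReal) (S : Set V) (P : ℕ)
    (σ : ↥S → ↥S → (Fin P ≃ Fin P)) :
    ({v : V // v ∉ S} ⊕ (↥S × Fin P)) → ({v : V // v ∉ S} ⊕ (↥S × Fin P)) → NNReal
  | Sum.inl u, Sum.inl v => c u.1 v.1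
  | Sum.inl u, Sum.inr (v, _) => c u.1 v.1
  | Sum.inr (v, _), Sum.inl u => c v.1 u.1
  | Sum.inr (u, i), Sum.inr (v, j) =>
      (if i = j then c u.1 v.1 else 0) + (if j = σ u v i then cs u.1 v.1 else 0)

/-- The flow `F` on the `P`-fold sibling replication of `S` induced by `f` and `g`. -/
def sibLiftFlow {V : Type*} (S : Set V) (P : ℕ) (σ : ↥S → ↥S → (Fin P ≃ Fin P))
    (f g : V → V → ℝ) :
    ({v : V // v ∉ S} ⊕ (↥S × Fin P)) → ({v : V // v ∉ S} ⊕ (↥S × Fin P)) → ℝ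
  | Sum.inl u, Sum.inl v => f u.1 v.1
  | Sum.inl u, Sum.inr (v, _) => f u.1 v.1
  | Sum.inr (v, _), Sum.inl u => f v.1 u.1
  | Sum.inr (u, i), Sum.inr (v, j) =>
      (if i = j then f u.1 v.1 else 0) + (if j = σ u v i then g u.1 v.1 else 0)

theorem sibLiftFlow_isFlow_and_value {V : Type*} [Fintype V]
    (c cs : V → V → NNReal) (S : Set V) (P : ℕ) (hP : 1 ≤ P)
    (σ : ↥S → ↥S → (Fin P ≃ Fin P))
    (s t : V) (hst : s ≠ t) (hs : s ∉ S) (ht : t ∉ S)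
    (hcs : ∀ u v, ¬(u ∈ S ∧ v ∈ S) → cs u v = 0)
    (hzero : ∀ u v, u ∉ S → v ∉ S → c u v = 0)
    (f g : V → V → ℝ)
    (hf : ∀ u v, 0 ≤ f u v ∧ f u v ≤ (c u v : ℝ))
    (hg : ∀ u v, 0 ≤ g u v ∧ g u v ≤ (cs u v : ℝ))
    (hcons : ∀ v, v ≠ s → v ≠ t →
      (∑ u, (f u v + g u v)) = (∑ w, (f v w + g v w)))
    (μ : ℝ)
    (hμ : μ = (∑ w, (f s w + g s w)) - (∑ u, (f u s + g u s))) :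
    IsFlow (sibRepCap c cs S P σ) (Sum.inl ⟨s, hs⟩) (Sum.inl ⟨t, ht⟩)
        (sibLiftFlow S P σ f g) ∧
      flowValue (sibLiftFlow S P σ f g) (Sum.inl ⟨s, hs⟩) = (P : ℝ) * μ := by
  have hf0 : ∀ u v, u ∉ S → v ∉ S → f u v = 0 := fun u v hu hv =>
    le_antisymm (by simpa [hzero u v hu hv] using (hf u v).2) (hf u v).1
  have hg0 : ∀ u v, ¬(u ∈ S ∧ v ∈ S) → g u v = 0 := fun u v h =>
    le_antisymm (by simpa [hcs u v h] using (hg u v).2) (hg u v).1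
  have hsplit : ∀ h : V → ℝ,
      (∑ u, h u) = (∑ u : ↥S, h u.1) + ∑ u : {v // v ∉ S}, h u.1 := fun h =>
    (Fintype.sum_subtype_add_sum_subtype (· ∈ S) h).symm
  set F := sibLiftFlow S P σ f g with hFdef
  -- sums at a non-S vertex
  have hinl_in : ∀ (v : V) (hv : v ∉ S),
      (∑ x, F x (Sum.inl ⟨v, hv⟩)) = (P : ℝ) * ∑ u, f u v := by
    intro v hv
    rw [Fintype.sum_sum_type, Fintype.sum_prod_type]
    have h1 : (∑ u : {x : V // x ∉ S}, F (Sum.inl u) (Sum.inl ⟨v, hv⟩)) = 0 :=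
      Finset.sum_eq_zero fun u _ => hf0 u.1 v u.2 hv
    have h2 : ∀ u : ↥S, (∑ _i : Fin P, F (Sum.inr (u, _i)) (Sum.inl ⟨v, hv⟩))
        = (P : ℝ) * f u.1 v := by
      intro u
      simp [hFdef, sibLiftFlow, mul_comm]
    rw [h1, zero_add]
    simp only [h2]
    rw [← Finset.mul_sum]
    congr 1
    rw [hsplit (fun u => f u v)]
    have : (∑ u : {x : V // x ∉ S}, f u.1 v) = 0 :=
      Finset.sum_eq_zero fun u _ => hf0 u.1 v u.2 hv
    rw [this, add_zero]
  have hinl_out : ∀ (v : V) (hv : v ∉ S),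
      (∑ x, F (Sum.inl ⟨v, hv⟩) x) = (P : ℝ) * ∑ w, f v w := by
    intro v hv
    rw [Fintype.sum_sum_type, Fintype.sum_prod_type]
    have h1 : (∑ u : {x : V // x ∉ S}, F (Sum.inl ⟨v, hv⟩) (Sum.inl u)) = 0 :=
      Finset.sum_eq_zero fun u _ => hf0 v u.1 hv u.2
    have h2 : ∀ u : ↥S, (∑ _i : Fin P, F (Sum.inl ⟨v, hv⟩) (Sum.inr (u, _i)))
        = (P : ℝ) * f v u.1 := by
      intro u
      simp [hFdef, sibLiftFlow, mul_comm]
    rw [h1, zero_add]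
    simp only [h2]
    rw [← Finset.mul_sum]
    congr 1
    rw [hsplit (fun w => f v w)]
    have : (∑ u : {x : V // x ∉ S}, f v u.1) = 0 :=
      Finset.sum_eq_zero fun u _ => hf0 v u.1 hv u.2
    rw [this, add_zero]
  -- sums at a replicated S vertex
  have hinr_in : ∀ (v : ↥S) (i : Fin P),
      (∑ x, F x (Sum.inr (v, i))) = ∑ u, (f u v.1 + g u v.1) := by
    intro v i
    rw [Fintype.sum_sum_type, Fintype.sum_prod_type]
    have h2 : ∀ u : ↥S, (∑ j : Fin P, F (Sum.inr (u, j)) (Sum.inr (v, i)))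
        = f u.1 v.1 + g u.1 v.1 := by
      intro u
      have : ∀ j : Fin P, F (Sum.inr (u, j)) (Sum.inr (v, i)) =
          (if j = i then f u.1 v.1 else 0) + (if j = (σ u v).symm i then g u.1 v.1 else 0) := by
        intro j
        simp only [hFdef, sibLiftFlow]
        congr 1
        apply if_congr _ rfl rfl
        constructor <;> rintro rfl <;> simp
      simp only [this, Finset.sum_add_distrib, Finset.sum_ite_eq' Finset.univ,
        Finset.mem_univ, if_true]
    simp only [h2]
    rw [Finset.sum_add_distrib]
    rw [hsplit (fun u => f u v.1 + g u v.1), Finset.sum_add_distrib]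
    have hgz : (∑ u : {x : V // x ∉ S}, (f u.1 v.1 + g u.1 v.1))
        = ∑ u : {x : V // x ∉ S}, f u.1 v.1 :=
      Finset.sum_congr rfl fun u _ => by rw [hg0 u.1 v.1 (fun h => u.2 h.1), add_zero]
    rw [hgz]
    rw [show (∑ a₁ : {x : V // x ∉ S}, F (Sum.inl a₁) (Sum.inr (v, i)))
        = ∑ a₁ : {x : V // x ∉ S}, f a₁.1 v.1 from rfl]
    ring
  have hinr_out : ∀ (v : ↥S) (i : Fin P),
      (∑ x, F (Sum.inr (v, i)) x) = ∑ w, (f v.1 w + g v.1 w) := by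
    intro v i
    rw [Fintype.sum_sum_type, Fintype.sum_prod_type]
    have h2 : ∀ u : ↥S, (∑ j : Fin P, F (Sum.inr (v, i)) (Sum.inr (u, j)))
        = f v.1 u.1 + g v.1 u.1 := by
      intro u
      have : ∀ j : Fin P, F (Sum.inr (v, i)) (Sum.inr (u, j)) =
          (if j = i then f v.1 u.1 else 0) + (if j = σ v u i then g v.1 u.1 else 0) := by
        intro j
        simp only [hFdef, sibLiftFlow]
        congr 1
        exact if_congr eq_comm rfl rfl
      simp only [this, Finset.sum_add_distrib, Finset.sum_ite_eq' Finset.univ,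
        Finset.mem_univ, if_true]
    simp only [h2]
    rw [Finset.sum_add_distrib]
    rw [hsplit (fun w => f v.1 w + g v.1 w), Finset.sum_add_distrib]
    have hgz : (∑ u : {x : V // x ∉ S}, (f v.1 u.1 + g v.1 u.1))
        = ∑ u : {x : V // x ∉ S}, f v.1 u.1 :=
      Finset.sum_congr rfl fun u _ => by rw [hg0 v.1 u.1 (fun h => u.2 h.2), add_zero]
    rw [hgz]
    rw [show (∑ a₁ : {x : V // x ∉ S}, F (Sum.inr (v, i)) (Sum.inl a₁))
        = ∑ a₁ : {x : V // x ∉ S}, f v.1 a₁.1 from rfl]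
    ring
  refine ⟨⟨?_, ?_⟩, ?_⟩
  · -- capacity bounds
    rintro (u | ⟨u, i⟩) (v | ⟨v, j⟩)
    · exact hf u.1 v.1
    · exact hf u.1 v.1
    · exact hf u.1 v.1
    · constructor
      · apply add_nonneg <;> split <;> simp [(hf _ _).1, (hg _ _).1]
      · simp only [hFdef, sibLiftFlow, sibRepCap, NNReal.coe_add,
          apply_ite ((↑) : NNReal → ℝ), NNReal.coe_zero]
        apply add_le_add <;> split <;>
          simp [(hf u.1 v.1).2, (hg u.1 v.1).2]
  · -- conservation
    rintro (v | ⟨v, i⟩) hvs hvt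
    · have hvs' : v.1 ≠ s := fun h => hvs (by cases v; simp_all)
      have hvt' : v.1 ≠ t := fun h => hvt (by cases v; simp_all)
      rw [hinl_in v.1 v.2, hinl_out v.1 v.2]
      congr 1
      have := hcons v.1 hvs' hvt'
      have hgl : ∀ u, g u v.1 = 0 := fun u => hg0 u v.1 (fun h => v.2 h.2)
      simp only [hgl, add_zero] at this
      have hgr : ∀ w, g v.1 w = 0 := fun w => hg0 v.1 w (fun h => v.2 h.1)
      simp only [hgr, add_zero] at this
      exact this
    · rw [hinr_in v i, hinr_out v i]
      exact hcons v.1 (fun h => hs (h ▸ v.2)) (fun h => ht (h ▸ v.2))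
  · -- value
    show (∑ w, F (Sum.inl ⟨s, hs⟩) w) - (∑ u, F u (Sum.inl ⟨s, hs⟩)) = (P : ℝ) * μ
    rw [hinl_out s hs, hinl_in s hs]
    have hgl : ∀ u, g u s = 0 := fun u => hg0 u s (fun h => hs h.2)
    have hgr : ∀ w, g s w = 0 := fun w => hg0 s w (fun h => hs h.1)
    simp only [hgl, hgr, add_zero] at hμ
    rw [hμ]
    ring

end
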